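/- arXiv:1312.1039 — 2 statements merged into one kernel-verified Lean document; each statement's English description precedes it below -/
import Mathlib

section
/- If h : ℝ₊ → ℝ is monotonically increasing and convex, then for Hermitian positive definite matrices A, B and each 1 ≤ k ≤ n, the sum of h applied to the k largest eigenvalues satisfies ∑_{j=1}^k h(λ_j^↓(A # B)) ≤ (1/2)∑_{j=1}^k h(λ_j^↓(A)) + (1/2)∑_{j=1}^k h(λ_j^↓(B)), i.e., the function X ↦ ∑_{j=1}^k h(λ_j^↓(X)) is geodesically midpoint convex on the positive definite manifold. -/
/-!
After conjugating by `A^{-1/2}`, the matrix AM-GM inequality `A # B ≤ (A + B) / 2` in the Löwner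
order becomes the scalar inequality `√t ≤ (1 + t) / 2`; concretely
`A + B - 2 (A # B) = X Xᴴ` with `X = A^{1/2} (1 - C^{1/2})` and `C = A^{-1/2} B A^{-1/2}`.
By Ky Fan's maximum principle (the sum of the `m` largest eigenvalues of a Hermitian matrix `M` is
the maximum of `∑ ⟪uᵢ, M uᵢ⟫` over orthonormal `m`-frames), the Löwner inequality makes
`λ↓(A # B)` weakly majorized by `(λ↓(A) + λ↓(B)) / 2`. A nondecreasing convex `h` preserves
weak majorization of a decreasing sequence (Abel summation against the decreasing, nonnegative
right derivatives of `h`), and convexity of `h` at each index finishes the proof.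
-/

set_option linter.unusedSectionVars false

namespace CGO

open Matrix
open scoped ComplexOrder

variable {n : Type*} [Fintype n] [DecidableEq n]

/-- The Löwner partial order `A ⪯ B` on matrices: `B - A` is positive semidefinite. -/
def LoewnerLE (A B : Matrix n n ℂ) : Prop := (B - A).PosSemidef

lemma cfc_isHermitian {A : Matrix n n ℂ} (hA : A.IsHermitian) (f : ℝ → ℝ) :
    (hA.cfc f).IsHermitian := by
  rw [Matrix.IsHermitian.cfc, Unitary.conjStarAlgAut_apply, Matrix.star_eq_conjTranspose]
  exact Matrix.isHermitian_mul_mul_conjTranspose _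
    (Matrix.isHermitian_diagonal_of_self_adjoint _ (by
      show star _ = _
      funext i; simp [Function.comp]))

/-- Real powers of a Hermitian matrix, defined through the spectral theorem
(for positive definite `A`, this is the usual power `A^t`). -/
noncomputable def mpow {A : Matrix n n ℂ} (hA : A.IsHermitian) (t : ℝ) : Matrix n n ℂ :=
  hA.cfc (fun x => x ^ t)

lemma mpow_isHermitian {A : Matrix n n ℂ} (hA : A.IsHermitian) (t : ℝ) :
    (mpow hA t).IsHermitian := cfc_isHermitian hA _

lemma mul_mul_isHermitian {A B : Matrix n n ℂ} (hA : A.IsHermitian) (hB : B.IsHermitian) :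
    (A * B * A).IsHermitian := by
  have h := Matrix.isHermitian_mul_mul_conjTranspose A hB
  rwa [hA.eq] at h

/-- The weighted matrix geometric mean `A #ₜ B := A^{1/2} (A^{-1/2} B A^{-1/2})^t A^{1/2}`.
The midpoint `t = 1/2` is the matrix geometric mean `A # B`. -/
noncomputable def wgmean {A B : Matrix n n ℂ} (hA : A.PosDef) (hB : B.PosDef) (t : ℝ) :
    Matrix n n ℂ :=
  mpow hA.1 (1/2) *
    mpow (mul_mul_isHermitian (mpow_isHermitian hA.1 (-(1/2))) hB.1) t *
    mpow hA.1 (1/2)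

lemma wgmean_isHermitian {A B : Matrix n n ℂ} (hA : A.PosDef) (hB : B.PosDef) (t : ℝ) :
    (wgmean hA hB t).IsHermitian := by
  have h := mul_mul_isHermitian (mpow_isHermitian hA.1 (1/2))
    (mpow_isHermitian (mul_mul_isHermitian (mpow_isHermitian hA.1 (-(1/2))) hB.1) t)
  simpa [wgmean, mul_assoc] using h

/-- The decreasingly sorted eigenvalues `λ₁^↓ ≥ λ₂^↓ ≥ …` of a Hermitian matrix. -/
noncomputable def eigDesc {d : ℕ} {A : Matrix (Fin d) (Fin d) ℂ} (hA : A.IsHermitian) :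
    Fin d → ℝ :=
  fun i => hA.eigenvalues (Tuple.sort (fun j => -hA.eigenvalues j) i)

section WeakMajorization

open Finset Set

variable {S : Set ℝ} {f : ℝ → ℝ}

lemma _root_.ConvexOn.add_rightDeriv_mul_sub_le (hf : ConvexOn ℝ S f) {x y : ℝ}
    (hx : x ∈ interior S) (hy : y ∈ S) : f x + derivWithin f (Ioi x) x * (y - x) ≤ f y := by
  rcases lt_trichotomy x y with hxy | rfl | hyx
  · have := hf.rightDeriv_le_slope_of_mem_interior hx hy hxy
    rw [slope_def_field, le_div_iff₀ (sub_pos.2 hxy)] at this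
    linarith
  · simp
  · have := (hf.slope_le_leftDeriv_of_mem_interior hy hx hyx).trans
      (hf.leftDeriv_le_rightDeriv_of_mem_interior hx)
    rw [slope_def_field, div_le_iff₀ (sub_pos.2 hyx)] at this
    linarith

lemma _root_.MonotoneOn.rightDeriv_nonneg (hf : MonotoneOn f S) {x : ℝ} (hx : x ∈ interior S) :
    0 ≤ derivWithin f (Ioi x) x := by
  rw [← derivWithin_inter (mem_interior_iff_mem_nhds.1 hx)]
  exact (hf.mono inter_subset_right).derivWithin_nonneg

lemma sum_mul_nonpos_of_prefix_sums_nonpos : ∀ {k : ℕ} {s a : Fin k → ℝ}, Antitone s →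
    (∀ i, 0 ≤ s i) → (∀ m (hm : m ≤ k), ∑ j : Fin m, a (Fin.castLE hm j) ≤ 0) →
    ∑ i, s i * a i ≤ 0
  | 0, _, _, _, _, _ => by simp
  | k + 1, s, a, hs, hs0, ha => by
    have hinit : ∑ i : Fin k, (s i.castSucc - s (Fin.last k)) * a i.castSucc ≤ 0 :=
      sum_mul_nonpos_of_prefix_sums_nonpos
        (fun i j hij => sub_le_sub_right (hs (Fin.castSucc_le_castSucc_iff.2 hij)) _)
        (fun i => sub_nonneg.2 (hs (Fin.le_last _)))
        (fun m hm => ha m (hm.trans k.le_succ))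
    have hlast : s (Fin.last k) * ∑ i, a i ≤ 0 :=
      mul_nonpos_of_nonneg_of_nonpos (hs0 _) (by simpa using ha (k + 1) le_rfl)
    calc ∑ i, s i * a i
        = ∑ i : Fin k, (s i.castSucc - s (Fin.last k)) * a i.castSucc
          + s (Fin.last k) * ∑ i, a i := by
          simp only [Fin.sum_univ_castSucc, sub_mul, sum_sub_distrib, mul_add, mul_sum]
          ring
      _ ≤ 0 := by linarith

theorem _root_.ConvexOn.sum_le_sum_of_prefix_sums_le (hf : ConvexOn ℝ S f)
    (hmono : MonotoneOn f S) {k : ℕ} {x y : Fin k → ℝ} (hx : Antitone x)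
    (hxS : ∀ i, x i ∈ interior S) (hyS : ∀ i, y i ∈ S)
    (hxy : ∀ m (hm : m ≤ k),
      ∑ j : Fin m, x (Fin.castLE hm j) ≤ ∑ j : Fin m, y (Fin.castLE hm j)) :
    ∑ i, f (x i) ≤ ∑ i, f (y i) := by
  set s := fun i => derivWithin f (Ioi (x i)) (x i)
  have hsub : ∑ i, (f (x i) - f (y i)) ≤ ∑ i, s i * (x i - y i) :=
    sum_le_sum fun i _ => by linarith [hf.add_rightDeriv_mul_sub_le (hxS i) (hyS i)]
  have habel : ∑ i, s i * (x i - y i) ≤ 0 :=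
    sum_mul_nonpos_of_prefix_sums_nonpos
      (fun i j hij => hf.monotoneOn_rightDeriv (hxS j) (hxS i) (hx hij))
      (fun i => hmono.rightDeriv_nonneg (hxS i))
      (fun m hm => by simpa [sum_sub_distrib] using hxy m hm)
  rw [sum_sub_distrib] at hsub
  linarith

end WeakMajorization

section KyFan

open Finset RCLike
open scoped InnerProductSpace

lemma sum_mul_le_sum_castLE_of_antitone {d m : ℕ} (hm : m ≤ d) {μ c : Fin d → ℝ}
    (hμ : Antitone μ) (hc0 : ∀ j, 0 ≤ c j) (hc1 : ∀ j, c j ≤ 1) (hc : ∑ j, c j = m) :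
    ∑ j, c j * μ j ≤ ∑ j : Fin m, μ (Fin.castLE hm j) := by
  rcases m with _ | m
  · have hc' : ∀ j, c j = 0 := fun j =>
      (sum_eq_zero_iff_of_nonneg fun j _ => hc0 j).1 (by simpa using hc) j (mem_univ j)
    simp [hc']
  obtain ⟨r, rfl⟩ := Nat.exists_eq_add_of_le hm
  rw [Fin.sum_univ_add] at hc ⊢
  -- the smallest of the top `m + 1` values of `μ` separates the two blocks
  set t := μ (Fin.castAdd r (Fin.last m))
  have htop : ∀ i, 0 ≤ (1 - c (Fin.castAdd r i)) * (μ (Fin.castAdd r i) - t) := fun i =>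
    mul_nonneg (sub_nonneg.2 (hc1 _)) (sub_nonneg.2 (hμ (Fin.le_def.2 (by simp; omega))))
  have hbot : ∀ i, 0 ≤ c (Fin.natAdd (m + 1) i) * (t - μ (Fin.natAdd (m + 1) i)) := fun i =>
    mul_nonneg (hc0 _) (sub_nonneg.2 (hμ (Fin.le_def.2 (by simp; omega))))
  have h1 := sum_nonneg fun i (_ : i ∈ univ) => htop i
  have h2 := sum_nonneg fun i (_ : i ∈ univ) => hbot i
  simp only [sub_mul, mul_sub, one_mul, sum_sub_distrib, ← sum_mul, sum_const, card_univ,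
    Fintype.card_fin, nsmul_eq_mul] at h1 h2
  have ht : (∑ i, c (Fin.castAdd r i)) * t + (∑ i, c (Fin.natAdd (m + 1) i)) * t =
      (m + 1 : ℕ) * t := by
    rw [← add_mul, hc]
  have htop_sum : ∑ j : Fin (m + 1), μ (Fin.castLE hm j) = ∑ j, μ (Fin.castAdd r j) := rfl
  linarith

variable {𝕜 E : Type*} [RCLike 𝕜] [NormedAddCommGroup E] [InnerProductSpace 𝕜 E] {d : ℕ}

lemma re_inner_map_self_eq_sum (b : OrthonormalBasis (Fin d) 𝕜 E) {T : E →ₗ[𝕜] E}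
    {μ : Fin d → ℝ} (hb : ∀ j, T (b j) = (μ j : 𝕜) • b j) (u : E) :
    re ⟪u, T u⟫_𝕜 = ∑ j, μ j * ‖⟪b j, u⟫_𝕜‖ ^ 2 := by
  have hTu : T u = ∑ j, (⟪b j, u⟫_𝕜 * μ j) • b j := by
    conv_lhs => rw [← b.sum_repr' u]
    simp [hb, smul_smul]
  rw [hTu, inner_sum, map_sum]
  refine sum_congr rfl fun j _ => ?_
  rw [inner_smul_right, mul_right_comm, ← inner_conj_symm u (b j), RCLike.mul_conj]
  norm_cast
  rw [mul_comm]

theorem sum_re_inner_map_self_le (b : OrthonormalBasis (Fin d) 𝕜 E) {T : E →ₗ[𝕜] E}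
    {μ : Fin d → ℝ} (hμ : Antitone μ) (hb : ∀ j, T (b j) = (μ j : 𝕜) • b j) {m : ℕ}
    (hm : m ≤ d) {u : Fin m → E} (hu : Orthonormal 𝕜 u) :
    ∑ i, re ⟪u i, T (u i)⟫_𝕜 ≤ ∑ j : Fin m, μ (Fin.castLE hm j) := by
  set c := fun j => ∑ i, ‖⟪u i, b j⟫_𝕜‖ ^ 2
  have hc1 : ∀ j, c j ≤ 1 := fun j => by
    simpa [c, b.orthonormal.1 j] using hu.sum_inner_products_le (b j) (s := univ)
  have hc : ∑ j, c j = m := by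
    rw [sum_comm]
    simp [b.sum_sq_norm_inner_left, hu.1]
  calc ∑ i, re ⟪u i, T (u i)⟫_𝕜 = ∑ j, c j * μ j := by
        simp only [re_inner_map_self_eq_sum b hb, c, sum_mul, mul_comm (μ _), norm_inner_symm]
        exact sum_comm
    _ ≤ _ := sum_mul_le_sum_castLE_of_antitone hm hμ (fun j => by positivity) hc1 hc

end KyFan

section MatrixPower

variable {A B : Matrix n n ℂ}

lemma mpow_eq_cfc (hA : A.IsHermitian) (t : ℝ) : mpow hA t = cfc (fun x : ℝ => x ^ t) A :=
  (hA.cfc_eq _).symm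

lemma mpow_zero (hA : A.IsHermitian) : mpow hA 0 = 1 := by
  rw [mpow_eq_cfc]
  simp only [Real.rpow_zero]
  exact cfc_const_one ℝ A hA

lemma mpow_one (hA : A.IsHermitian) : mpow hA 1 = A := by
  rw [mpow_eq_cfc]
  simp only [Real.rpow_one]
  exact cfc_id' ℝ A hA

lemma mpow_mul_mpow (hA : A.PosDef) (s t : ℝ) :
    mpow hA.1 s * mpow hA.1 t = mpow hA.1 (s + t) := by
  simp only [mpow_eq_cfc]
  rw [← cfc_mul _ _ _ (A.finite_real_spectrum.continuousOn _)
    (A.finite_real_spectrum.continuousOn _)]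
  refine cfc_congr fun x hx => (Real.rpow_add ?_ s t).symm
  rw [hA.1.spectrum_real_eq_range_eigenvalues] at hx
  obtain ⟨i, rfl⟩ := hx
  exact hA.eigenvalues_pos i

lemma mpow_posDef (hA : A.PosDef) (t : ℝ) : (mpow hA.1 t).PosDef := by
  rw [mpow, IsHermitian.cfc, Unitary.conjStarAlgAut_apply,
    IsUnit.posDef_star_right_conjugate_iff (Unitary.isUnit_coe ..), posDef_diagonal_iff]
  exact fun i => by simpa using Real.rpow_pos_of_pos (hA.eigenvalues_pos i) t

lemma posDef_mpow_mul_mul_mpow (hA : A.PosDef) (hB : B.PosDef) (t : ℝ) :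
    (mpow hA.1 t * B * mpow hA.1 t).PosDef := by
  have h := hB.conjTranspose_mul_mul_same (mulVec_injective_of_isUnit (mpow_posDef hA t).isUnit)
  rwa [(mpow_isHermitian hA.1 t).eq] at h

lemma wgmean_posDef (hA : A.PosDef) (hB : B.PosDef) (t : ℝ) : (wgmean hA hB t).PosDef :=
  posDef_mpow_mul_mul_mpow hA (mpow_posDef (posDef_mpow_mul_mul_mpow hA hB _) t) _

lemma loewnerLE_wgmean_half (hA : A.PosDef) (hB : B.PosDef) :
    LoewnerLE (wgmean hA hB (1/2)) ((1/2 : ℝ) • A + (1/2 : ℝ) • B) := by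
  have hC := posDef_mpow_mul_mul_mpow hA hB (-(1/2))
  set R := mpow hA.1 (1/2)
  set N := mpow hA.1 (-(1/2))
  set S := mpow hC.1 (1/2)
  have hRR : R * R = A := by rw [mpow_mul_mpow hA]; norm_num; exact mpow_one _
  have hSS : S * S = N * B * N := by rw [mpow_mul_mpow hC]; norm_num; exact mpow_one _
  have hRCR : R * (N * B * N) * R = B := by
    have hRN : R * N = 1 := by rw [mpow_mul_mpow hA]; norm_num [mpow_zero]
    have hNR : N * R = 1 := by rw [mpow_mul_mpow hA]; norm_num [mpow_zero]
    rw [show R * (N * B * N) * R = (R * N) * B * (N * R) by simp only [mul_assoc], hRN, hNR,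
      one_mul, mul_one]
  have hsq : (R - R * S) * (R - R * S)ᴴ = A + B - wgmean hA hB (1/2) - wgmean hA hB (1/2) := by
    rw [conjTranspose_sub, conjTranspose_mul, (mpow_isHermitian _ _).eq,
      (mpow_isHermitian _ _).eq]
    calc (R - R * S) * (R - S * R) = R * R + R * (S * S) * R - R * S * R - R * S * R := by
          noncomm_ring
      _ = _ := by rw [hRR, hSS, hRCR]; rfl
  have key : (1/2 : ℝ) • A + (1/2 : ℝ) • B - wgmean hA hB (1/2) =
      (1/2 : ℝ) • ((R - R * S) * (R - R * S)ᴴ) := by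
    rw [hsq]
    module
  rw [LoewnerLE, key]
  exact (posSemidef_self_mul_conjTranspose _).smul (by norm_num)

end MatrixPower

section EigDesc

open Finset RCLike
open scoped InnerProductSpace

variable {d : ℕ} {X : Matrix (Fin d) (Fin d) ℂ}

lemma eigDesc_antitone (hX : X.IsHermitian) : Antitone (eigDesc hX) :=
  fun _ _ hij => neg_le_neg_iff.1 (Tuple.monotone_sort (fun j => -hX.eigenvalues j) hij)

lemma eigDesc_pos (hX : X.PosDef) (i : Fin d) : 0 < eigDesc hX.1 i :=
  hX.eigenvalues_pos _

noncomputable def eigDescBasis (hX : X.IsHermitian) :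
    OrthonormalBasis (Fin d) ℂ (EuclideanSpace ℂ (Fin d)) :=
  hX.eigenvectorBasis.reindex (Tuple.sort fun j => -hX.eigenvalues j).symm

lemma toEuclideanLin_eigDescBasis (hX : X.IsHermitian) (j : Fin d) :
    toEuclideanLin X (eigDescBasis hX j) = (eigDesc hX j : ℂ) • eigDescBasis hX j := by
  ext : 1
  simp [eigDescBasis, eigDesc, hX.mulVec_eigenvectorBasis]

theorem sum_eigDesc_le_of_loewnerLE {Y Z : Matrix (Fin d) (Fin d) ℂ} (hX : X.IsHermitian)
    (hY : Y.IsHermitian) (hZ : Z.IsHermitian) {s t : ℝ} (hs : 0 ≤ s) (ht : 0 ≤ t)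
    (hXYZ : LoewnerLE X (s • Y + t • Z)) {m : ℕ} (hm : m ≤ d) :
    ∑ j : Fin m, eigDesc hX (Fin.castLE hm j) ≤
      s * ∑ j : Fin m, eigDesc hY (Fin.castLE hm j) +
        t * ∑ j : Fin m, eigDesc hZ (Fin.castLE hm j) := by
  set u := fun i => eigDescBasis hX (Fin.castLE hm i)
  have hu : Orthonormal ℂ u := (eigDescBasis hX).orthonormal.comp _ (Fin.castLE_injective hm)
  have hquad : ∀ v, re ⟪v, toEuclideanLin X v⟫_ℂ ≤
      s * re ⟪v, toEuclideanLin Y v⟫_ℂ + t * re ⟪v, toEuclideanLin Z v⟫_ℂ := fun v => by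
    have := (isPositive_toEuclideanLin_iff.2 hXYZ).re_inner_nonneg_right v
    simpa [← Complex.coe_smul, inner_sub_right, inner_add_right, inner_smul_right] using this
  calc ∑ j : Fin m, eigDesc hX (Fin.castLE hm j)
        = ∑ i, re ⟪u i, toEuclideanLin X (u i)⟫_ℂ := by
        simp [u, toEuclideanLin_eigDescBasis]
    _ ≤ ∑ i, (s * re ⟪u i, toEuclideanLin Y (u i)⟫_ℂ +
          t * re ⟪u i, toEuclideanLin Z (u i)⟫_ℂ) :=
        sum_le_sum fun i _ => hquad (u i)
    _ = s * ∑ i, re ⟪u i, toEuclideanLin Y (u i)⟫_ℂ +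
          t * ∑ i, re ⟪u i, toEuclideanLin Z (u i)⟫_ℂ := by
        rw [sum_add_distrib, mul_sum, mul_sum]
    _ ≤ _ := add_le_add
        (mul_le_mul_of_nonneg_left (sum_re_inner_map_self_le (eigDescBasis hY)
          (eigDesc_antitone hY) (toEuclideanLin_eigDescBasis hY) hm hu) hs)
        (mul_le_mul_of_nonneg_left (sum_re_inner_map_self_le (eigDescBasis hZ)
          (eigDesc_antitone hZ) (toEuclideanLin_eigDescBasis hZ) hm hu) ht)

end EigDesc

open Finset in
theorem sum_eigDesc_wgmean_half_le {d : ℕ} {A B : Matrix (Fin d) (Fin d) ℂ} (hA : A.PosDef)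
    (hB : B.PosDef) {m : ℕ} (hm : m ≤ d) :
    ∑ j : Fin m, eigDesc (wgmean_isHermitian hA hB (1/2)) (Fin.castLE hm j) ≤
      ∑ j : Fin m,
        (1/2 * eigDesc hA.1 (Fin.castLE hm j) + 1/2 * eigDesc hB.1 (Fin.castLE hm j)) := by
  rw [sum_add_distrib, ← mul_sum, ← mul_sum]
  exact sum_eigDesc_le_of_loewnerLE _ hA.1 hB.1 (by norm_num) (by norm_num)
    (loewnerLE_wgmean_half hA hB) hm

theorem sum_h_eigDesc_gmean_le_general {d : ℕ} {h : ℝ → ℝ}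
    (hmono : MonotoneOn h (Set.Ici 0)) (hconv : ConvexOn ℝ (Set.Ici 0) h)
    {A B : Matrix (Fin d) (Fin d) ℂ} (hA : A.PosDef) (hB : B.PosDef)
    (k : ℕ) (hk : k ≤ d) :
    ∑ j : Fin k, h (eigDesc (wgmean_isHermitian hA hB (1/2)) (Fin.castLE hk j)) ≤
      (1/2) * ∑ j : Fin k, h (eigDesc hA.1 (Fin.castLE hk j)) +
      (1/2) * ∑ j : Fin k, h (eigDesc hB.1 (Fin.castLE hk j)) := by
  have hG := wgmean_posDef hA hB (1/2)
  calc ∑ j : Fin k, h (eigDesc hG.1 (Fin.castLE hk j))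
      ≤ ∑ j : Fin k, h (1/2 * eigDesc hA.1 (Fin.castLE hk j) +
          1/2 * eigDesc hB.1 (Fin.castLE hk j)) :=
        hconv.sum_le_sum_of_prefix_sums_le hmono
          ((eigDesc_antitone hG.1).comp_monotone (Fin.strictMono_castLE hk).monotone)
          (fun j => by rw [interior_Ici]; exact eigDesc_pos hG _)
          (fun j => add_nonneg (mul_nonneg (by norm_num) (eigDesc_pos hA _).le)
            (mul_nonneg (by norm_num) (eigDesc_pos hB _).le))
          (fun m hm => by
            simpa only [Fin.castLE_castLE] using sum_eigDesc_wgmean_half_le hA hB (hm.trans hk))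
    _ ≤ ∑ j : Fin k, (1/2 * h (eigDesc hA.1 (Fin.castLE hk j)) +
          1/2 * h (eigDesc hB.1 (Fin.castLE hk j))) :=
        Finset.sum_le_sum fun j _ =>
          hconv.2 (eigDesc_pos hA _).le (eigDesc_pos hB _).le (by norm_num) (by norm_num)
            (by norm_num)
    _ = _ := by rw [Finset.sum_add_distrib, Finset.mul_sum, Finset.mul_sum]

/-- Tracial g-convexity: for nondecreasing convex `h : ℝ₊ → ℝ`,
`X ↦ ∑_{j=1}^k h(λ_j^↓(X))` is geodesically midpoint convex. -/
theorem sum_h_eigDesc_gmean_le {d : ℕ} {h : ℝ → ℝ}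
    (hmono : MonotoneOn h (Set.Ici 0)) (hconv : ConvexOn ℝ (Set.Ici 0) h)
    {A B : Matrix (Fin d) (Fin d) ℂ} (hA : A.PosDef) (hB : B.PosDef)
    (k : ℕ) (hk1 : 1 ≤ k) (hk : k ≤ d) :
    ∑ j : Fin k, h (eigDesc (wgmean_isHermitian hA hB (1/2)) (Fin.castLE hk j)) ≤
      (1/2) * ∑ j : Fin k, h (eigDesc hA.1 (Fin.castLE hk j)) +
      (1/2) * ∑ j : Fin k, h (eigDesc hB.1 (Fin.castLE hk j)) :=
  sum_h_eigDesc_gmean_le_general hmono hconv hA hB k hk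

end CGO
end

section
/- For Hermitian positive definite matrices A, B ∈ P_{d₁} and C, D ∈ P_{d₂}, the geometric mean tensorizes: (A # B) ⊗ (C # D) = (A ⊗ C) # (B ⊗ D). -/
set_option linter.unusedSectionVars false

namespace CGO

open Matrix
open scoped ComplexOrder

variable {n : Type*} [Fintype n] [DecidableEq n]

/-! The positive square root commutes with the Kronecker product: `A^{1/2} ⊗ C^{1/2}` is positive
semidefinite and squares to `A ⊗ C` by the mixed-product rule, so it is `(A ⊗ C)^{1/2}` by
uniqueness of square roots. Together with `(X ⊗ Y)⁻¹ = X⁻¹ ⊗ Y⁻¹`, every factor of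
`A^{1/2} (A^{-1/2} B A^{-1/2})^{1/2} A^{1/2}` splits over `⊗`, and the mixed-product rule
reassembles the two means. -/

open scoped MatrixOrder Kronecker

section RCLike

variable {𝕜 : Type*} [RCLike 𝕜]

lemma sqrt_kronecker {m : Type*} [Fintype m] [DecidableEq m] {A : Matrix n n 𝕜}
    {C : Matrix m m 𝕜} (hA : A.PosSemidef) (hC : C.PosSemidef) :
    CFC.sqrt (A ⊗ₖ C) = CFC.sqrt A ⊗ₖ CFC.sqrt C :=
  CFC.sqrt_unique
    (by rw [← mul_kronecker_mul, CFC.sqrt_mul_sqrt_self A hA.nonneg,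
      CFC.sqrt_mul_sqrt_self C hC.nonneg])
    ((CFC.sqrt_nonneg A).posSemidef.kronecker (CFC.sqrt_nonneg C).posSemidef).nonneg

lemma rpow_neg_half_eq_inv_sqrt {A : Matrix n n 𝕜} (hA : A.PosDef) :
    A ^ (-(1/2) : ℝ) = (CFC.sqrt A)⁻¹ := by
  refine (inv_eq_left_inv ?_).symm
  rw [CFC.sqrt_eq_rpow]
  exact CFC.rpow_neg_mul_rpow _ hA.isStrictlyPositive

lemma posSemidef_inv_sqrt_mul_mul_inv_sqrt {A B : Matrix n n 𝕜} (hB : B.PosSemidef) :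
    ((CFC.sqrt A)⁻¹ * B * (CFC.sqrt A)⁻¹).PosSemidef := by
  simpa [(CFC.sqrt_nonneg A).posSemidef.1.inv.eq] using
    hB.mul_mul_conjTranspose_same (CFC.sqrt A)⁻¹

end RCLike

lemma mpow_eq_rpow {A : Matrix n n ℂ} (h : A.IsHermitian) (hA : A.PosSemidef) (t : ℝ) :
    mpow h t = A ^ t := by
  rw [mpow, ← h.cfc_eq, CFC.rpow_eq_cfc_real hA.nonneg]

lemma wgmean_half {A B : Matrix n n ℂ} (hA : A.PosDef) (hB : B.PosDef) :
    wgmean hA hB (1/2) =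
      CFC.sqrt A * CFC.sqrt ((CFC.sqrt A)⁻¹ * B * (CFC.sqrt A)⁻¹) * CFC.sqrt A := by
  have hinv : mpow hA.1 (-(1/2)) = (CFC.sqrt A)⁻¹ := by
    rw [mpow_eq_rpow _ hA.posSemidef, rpow_neg_half_eq_inv_sqrt hA]
  have hmid : (mpow hA.1 (-(1/2)) * B * mpow hA.1 (-(1/2))).PosSemidef := by
    rw [hinv]
    exact posSemidef_inv_sqrt_mul_mul_inv_sqrt hB.posSemidef
  rw [wgmean, mpow_eq_rpow _ hmid, hinv, mpow_eq_rpow _ hA.posSemidef,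
    ← CFC.sqrt_eq_rpow, ← CFC.sqrt_eq_rpow]

open Kronecker in
/-- The geometric mean tensorizes:
`(A # B) ⊗ (C # D) = (A ⊗ C) # (B ⊗ D)`. -/
theorem gmean_kronecker {m : Type*} [Fintype m] [DecidableEq m]
    {A B : Matrix n n ℂ} {C D : Matrix m m ℂ}
    (hA : A.PosDef) (hB : B.PosDef) (hC : C.PosDef) (hD : D.PosDef)
    (hAC : (A ⊗ₖ C).PosDef) (hBD : (B ⊗ₖ D).PosDef) :
    wgmean hA hB (1/2) ⊗ₖ wgmean hC hD (1/2) = wgmean hAC hBD (1/2) := by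
  rw [wgmean_half, wgmean_half, wgmean_half, sqrt_kronecker hA.posSemidef hC.posSemidef,
    inv_kronecker, ← mul_kronecker_mul, ← mul_kronecker_mul,
    sqrt_kronecker (posSemidef_inv_sqrt_mul_mul_inv_sqrt hB.posSemidef)
      (posSemidef_inv_sqrt_mul_mul_inv_sqrt hD.posSemidef),
    mul_kronecker_mul, mul_kronecker_mul]

end CGO
end
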